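/- arXiv:1408.0876 — 7 statements merged into one kernel-verified Lean document; each statement's English description precedes it below -/
import Mathlib

section
/- Let α > 2, 0 < r₀ < r, and let N₀ > 0, P > 0, ρ* ∈ (0,1) be reals and K ≥ 2. Define A = α·r₀^{2−α}, μ = (A − 2r^{2−α})/((α−2)r²), and for x ∈ (r₀, r) define μ̂(x) = (A − 2x^{2−α})/((α−2)r²). Define d₀ = ( r^{2−α} + (A − 2r^{2−α})(1−ρ*)N₀ / ( 2N₀ + 2ρ*(A − 2r^{2−α})(K−1)P/((α−2)r²) ) )^{−1/(α−2)}. Then the inner expression is strictly positive (so d₀ is well defined), and μ̂(d₀)·N₀ = ρ* · μ · ( (μ − μ̂(d₀))·(K−1)·P + N₀ ). In particular, the SINR-ratio lower bound μ̂(d₀)N₀ / ( μ((μ − μ̂(d₀))(K−1)P + N₀) ) of Theorem 1 equals exactly ρ*. -/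
/-! The threshold `d₀` is obtained by solving `μ̂(d₀) N₀ = ρ* μ ((μ − μ̂(d₀))(K−1)P + N₀)`,
which is linear in the gap `μ − μ̂(d₀)`: its solution is `μ(1−ρ*)N₀ / (N₀ + ρ* μ (K−1)P)`.
Since `μ − μ̂(x) = 2(x^{2−α} − r^{2−α})/((α−2)r²)`, prescribing this gap prescribes `d₀^{2−α}`,
and the positivity of `α r₀^{2−α} − 2 r^{2−α}` makes that value positive. -/

open Real

lemma sinr_bound_eq_of_mean_gap {μ μhat N₀ c ρ : ℝ} (hden : N₀ + ρ * μ * c ≠ 0)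
    (hgap : μ - μhat = μ * (1 - ρ) * N₀ / (N₀ + ρ * μ * c)) :
    μhat * N₀ = ρ * (μ * ((μ - μhat) * c + N₀)) := by
  rw [eq_div_iff hden] at hgap
  linear_combination -hgap

lemma mean_pathLoss_numerator_pos {α r₀ r : ℝ} (hα : 2 < α) (hr₀ : 0 < r₀) (hr : r₀ ≤ r) :
    0 < α * r₀ ^ (2 - α) - 2 * r ^ (2 - α) := by
  have hmono : r ^ (2 - α) ≤ r₀ ^ (2 - α) := rpow_le_rpow_of_nonpos hr₀ hr (by linarith)
  have hpos : 0 < (α - 2) * r ^ (2 - α) :=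
    mul_pos (by linarith) (rpow_pos_of_pos (hr₀.trans_le hr) _)
  nlinarith

lemma threshold_mean_gap {B C N₀ c ρ : ℝ} (hC : C ≠ 0) :
    B / C - (B - 2 * (B * (1 - ρ) * N₀ / (2 * N₀ + 2 * ρ * B * c / C))) / C
      = B / C * (1 - ρ) * N₀ / (N₀ + ρ * (B / C) * c) := by
  rw [show 2 * N₀ + 2 * ρ * B * c / C = 2 * (N₀ + ρ * (B / C) * c) by ring]
  field_simp
  ring

lemma rpow_neg_inv_rpow_neg {x a : ℝ} (hx : 0 ≤ x) (ha : a ≠ 0) : (x ^ (-a⁻¹)) ^ (-a) = x := by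
  rw [← inv_neg, rpow_inv_rpow hx (neg_ne_zero.mpr ha)]

/-- With `A = α·r₀^(2−α)`, `μ = (A − 2r^(2−α))/((α−2)r²)`,
`μ̂(x) = (A − 2x^(2−α))/((α−2)r²)`, and
`d₀ = (r^(2−α) + (A − 2r^(2−α))(1−ρ*)N₀ / (2N₀ + 2ρ*(A − 2r^(2−α))(K−1)P/((α−2)r²)))^(−1/(α−2))`,
the inner expression is strictly positive (so `d₀` is well defined) and
`μ̂(d₀)·N₀ = ρ*·μ·((μ − μ̂(d₀))·(K−1)·P + N₀)`; in particular the SINR-ratio lower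
bound `μ̂(d₀)N₀/(μ((μ − μ̂(d₀))(K−1)P + N₀))` equals exactly `ρ*`. -/
theorem stmt_9 (α r₀ r N₀ P ρstar K : ℝ)
    (hα : 2 < α) (hr₀ : 0 < r₀) (hr : r₀ < r) (hN₀ : 0 < N₀) (hP : 0 < P)
    (hρ : ρstar ∈ Set.Ioo (0 : ℝ) 1) (hK : 2 ≤ K)
    (A μ d₀ : ℝ) (μhat : ℝ → ℝ)
    (hA : A = α * r₀ ^ (2 - α))
    (hμ : μ = (A - 2 * r ^ (2 - α)) / ((α - 2) * r ^ 2))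
    (hμhat : ∀ x, μhat x = (A - 2 * x ^ (2 - α)) / ((α - 2) * r ^ 2))
    (hd₀ : d₀ = (r ^ (2 - α) + (A - 2 * r ^ (2 - α)) * (1 - ρstar) * N₀ /
        (2 * N₀ + 2 * ρstar * (A - 2 * r ^ (2 - α)) * (K - 1) * P /
          ((α - 2) * r ^ 2))) ^ (-(α - 2)⁻¹)) :
    0 < r ^ (2 - α) + (A - 2 * r ^ (2 - α)) * (1 - ρstar) * N₀ /
        (2 * N₀ + 2 * ρstar * (A - 2 * r ^ (2 - α)) * (K - 1) * P / ((α - 2) * r ^ 2)) ∧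
    μhat d₀ * N₀ = ρstar * (μ * ((μ - μhat d₀) * (K - 1) * P + N₀)) ∧
    μhat d₀ * N₀ / (μ * ((μ - μhat d₀) * (K - 1) * P + N₀)) = ρstar := by
  obtain ⟨hρ0, hρ1⟩ := hρ
  have hρ1' : 0 < 1 - ρstar := by linarith
  have hB : 0 < A - 2 * r ^ (2 - α) := hA ▸ mean_pathLoss_numerator_pos hα hr₀ hr.le
  have hrpos : 0 < r := hr₀.trans hr
  have hC : 0 < (α - 2) * r ^ 2 := mul_pos (by linarith) (pow_pos hrpos 2)
  have hK1 : 0 < K - 1 := by linarith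
  have hμpos : 0 < μ := hμ ▸ div_pos hB hC
  set E := r ^ (2 - α) + (A - 2 * r ^ (2 - α)) * (1 - ρstar) * N₀ /
      (2 * N₀ + 2 * ρstar * (A - 2 * r ^ (2 - α)) * (K - 1) * P / ((α - 2) * r ^ 2)) with hE
  have hEpos : 0 < E := by
    have := rpow_pos_of_pos hrpos (2 - α)
    positivity
  have hd₀E : d₀ ^ (2 - α) = E := by
    rw [hd₀, show 2 - α = -(α - 2) by ring, rpow_neg_inv_rpow_neg hEpos.le (by linarith)]
  have hden : 0 < N₀ + ρstar * μ * ((K - 1) * P) := by positivity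
  have hgap : μ - μhat d₀ = μ * (1 - ρstar) * N₀ / (N₀ + ρstar * μ * ((K - 1) * P)) := by
    rw [hμhat, hd₀E, hE, hμ]
    linear_combination threshold_mean_gap (B := A - 2 * r ^ (2 - α)) (N₀ := N₀) (c := (K - 1) * P)
      (ρ := ρstar) hC.ne'
  have hmain := sinr_bound_eq_of_mean_gap hden.ne' hgap
  rw [← mul_assoc (μ - μhat d₀)] at hmain
  refine ⟨hEpos, hmain, div_eq_of_eq_mul ?_ hmain⟩
  have hgap_nonneg : 0 ≤ μ - μhat d₀ := by rw [hgap]; positivity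
  positivity
end

section
/- Let α > 2, r₀ > 0, N₀ > 0, P > 0, β_K > 0 and ρ* ∈ (0,1) be reals. For r > r₀ define d₀(r) = ( r^{2−α} + (α·r₀^{2−α} − 2r^{2−α})(1−ρ*)N₀ / ( 2N₀ + 2ρ*(α·r₀^{2−α} − 2r^{2−α})·π·β_K·P/(α−2) ) )^{−1/(α−2)}, i.e. the threshold of equation (18) with K−1 = π·β_K·r². Then as r → ∞, d₀(r) converges to the finite positive limit ( (2N₀(α−2) + 2α·r₀^{2−α}·ρ*·π·β_K·P) / (α·r₀^{2−α}·N₀·(1−ρ*)·(α−2)) )^{1/(α−2)}. -/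
/-!
Since `α > 2`, `s = r^(2-α) → 0` as `r → ∞`. The base of `d₀` is a rational function of `s`
whose denominator `2N₀ + 2ρ*(α r₀^(2-α) - 2s)πβ_K P/(α-2)` is positive at `s = 0`, so it is
continuous there and `d₀(r)` tends to the value of `base^(-1/(α-2))` at `s = 0`, which is the
stated constant.
-/

open Filter Topology

/-- The base of `d₀` as a function of `s = r^(2-α)`, with `c = α r₀^(2-α)`. -/
noncomputable def thresholdBase (α c N₀ P βK ρ s : ℝ) : ℝ :=
  s + (c - 2 * s) * (1 - ρ) * N₀ / (2 * N₀ + 2 * ρ * (c - 2 * s) * Real.pi * βK * P / (α - 2))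

section ThresholdBase

variable {α c N₀ P βK ρ : ℝ}

theorem continuousAt_thresholdBase {s : ℝ}
    (hs : 2 * N₀ + 2 * ρ * (c - 2 * s) * Real.pi * βK * P / (α - 2) ≠ 0) :
    ContinuousAt (thresholdBase α c N₀ P βK ρ) s := by
  unfold thresholdBase
  exact continuousAt_id.add ((by fun_prop : ContinuousAt _ s).div (by fun_prop) hs)

theorem thresholdBase_zero_pos (hα : 2 < α) (hc : 0 < c) (hN₀ : 0 < N₀) (hP : 0 ≤ P)
    (hβ : 0 ≤ βK) (hρ0 : 0 ≤ ρ) (hρ1 : ρ < 1) :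
    0 < thresholdBase α c N₀ P βK ρ 0 := by
  have hα2 : 0 < α - 2 := sub_pos.2 hα
  have hρ1' : 0 < 1 - ρ := sub_pos.2 hρ1
  simp only [thresholdBase, mul_zero, sub_zero, zero_add]
  positivity

theorem inv_thresholdBase_zero (hα : α ≠ 2) :
    (thresholdBase α c N₀ P βK ρ 0)⁻¹ =
      (2 * N₀ * (α - 2) + 2 * c * ρ * Real.pi * βK * P) / (c * N₀ * (1 - ρ) * (α - 2)) := by
  have hα2 : α - 2 ≠ 0 := sub_ne_zero.2 hα
  simp only [thresholdBase, mul_zero, sub_zero, zero_add, inv_div]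
  field_simp

end ThresholdBase

/-- With `d₀(r)` the threshold of equation (18) with `K − 1 = π·β_K·r²`,
as `r → ∞` the threshold `d₀(r)` converges to the finite positive limit
`((2N₀(α−2) + 2α·r₀^(2−α)·ρ*·π·β_K·P) / (α·r₀^(2−α)·N₀·(1−ρ*)·(α−2)))^(1/(α−2))`. -/
theorem stmt_10 (α r₀ N₀ P βK ρstar L : ℝ)
    (hα : 2 < α) (hr₀ : 0 < r₀) (hN₀ : 0 < N₀) (hP : 0 < P) (hβ : 0 < βK)
    (hρ : ρstar ∈ Set.Ioo (0 : ℝ) 1)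
    (hL : L = ((2 * N₀ * (α - 2) + 2 * α * r₀ ^ (2 - α) * ρstar * Real.pi * βK * P) /
        (α * r₀ ^ (2 - α) * N₀ * (1 - ρstar) * (α - 2))) ^ (α - 2)⁻¹) :
    0 < L ∧
    Tendsto (fun r : ℝ =>
        (r ^ (2 - α) + (α * r₀ ^ (2 - α) - 2 * r ^ (2 - α)) * (1 - ρstar) * N₀ /
            (2 * N₀ + 2 * ρstar * (α * r₀ ^ (2 - α) - 2 * r ^ (2 - α)) *
              Real.pi * βK * P / (α - 2))) ^ (-(α - 2)⁻¹))
      atTop (nhds L) := by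
  obtain ⟨hρ0, hρ1⟩ := hρ
  have hα2 : 0 < α - 2 := sub_pos.2 hα
  set c := α * r₀ ^ (2 - α) with hc_def
  have hc : 0 < c := by positivity
  have hbase := thresholdBase_zero_pos hα hc hN₀ hP.le hβ.le hρ0.le hρ1
  have hden : 2 * N₀ + 2 * ρstar * (c - 2 * 0) * Real.pi * βK * P / (α - 2) ≠ 0 := by
    rw [mul_zero, sub_zero]
    positivity
  have hL' : L = thresholdBase α c N₀ P βK ρstar 0 ^ (-(α - 2)⁻¹) := by
    rw [hL, Real.rpow_neg hbase.le, ← Real.inv_rpow hbase.le, inv_thresholdBase_zero hα.ne',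
      hc_def, ← mul_assoc 2 α]
  have hs : Tendsto (fun r : ℝ => r ^ (2 - α)) atTop (𝓝 0) := by
    simpa only [neg_sub] using tendsto_rpow_neg_atTop hα2
  refine ⟨hL' ▸ Real.rpow_pos_of_pos hbase _, hL' ▸ ?_⟩
  exact (Real.continuousAt_rpow_const _ _ (Or.inl hbase.ne')).tendsto.comp
    ((continuousAt_thresholdBase hden).tendsto.comp hs)
end

section
/- Let d₀ > 0 and c > 0 be reals, and let r₁ > 2d₀ be a real satisfying (r₁ − 2d₀)²·r₁² = c·(r₁ − d₀). Then c^{1/3} ≤ r₁ ≤ c^{1/3} + 2d₀. -/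
/-!
The equation squeezes `c` between two cubes: since `(r₁ - 2d₀)² ≤ r₁ (r₁ - d₀)` and
`(r₁ - 2d₀)(r₁ - d₀) ≤ r₁²`, dividing it by `r₁ - d₀ > 0` gives `(r₁ - 2d₀)³ ≤ c ≤ r₁³`.
Taking cube roots yields both bounds.
-/

section CubeBounds

variable {d c r : ℝ}

lemma le_cube_of_sq_mul_sq_eq (hd : 0 ≤ d) (hr : 2 * d < r)
    (heq : (r - 2 * d) ^ 2 * r ^ 2 = c * (r - d)) : c ≤ r ^ 3 := by
  have hsq : (r - 2 * d) ^ 2 ≤ r * (r - d) := by nlinarith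
  have hrd : 0 < r - d := by linarith
  refine le_of_mul_le_mul_right ?_ hrd
  calc c * (r - d) = (r - 2 * d) ^ 2 * r ^ 2 := heq.symm
    _ ≤ r * (r - d) * r ^ 2 := by gcongr
    _ = r ^ 3 * (r - d) := by ring

lemma sub_two_mul_cube_le_of_sq_mul_sq_eq (hd : 0 ≤ d) (hr : 2 * d < r)
    (heq : (r - 2 * d) ^ 2 * r ^ 2 = c * (r - d)) : (r - 2 * d) ^ 3 ≤ c := by
  have hprod : (r - 2 * d) * (r - d) ≤ r ^ 2 := by nlinarith
  have hrd : 0 < r - d := by linarith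
  refine le_of_mul_le_mul_right ?_ hrd
  calc (r - 2 * d) ^ 3 * (r - d) = (r - 2 * d) ^ 2 * ((r - 2 * d) * (r - d)) := by ring
    _ ≤ (r - 2 * d) ^ 2 * r ^ 2 := by gcongr
    _ = c * (r - d) := heq

end CubeBounds

lemma Real.rpow_one_div_three_le_iff {x y : ℝ} (hx : 0 ≤ x) (hy : 0 ≤ y) :
    x ^ ((1 : ℝ) / 3) ≤ y ↔ x ≤ y ^ 3 := by
  rw [one_div, Real.rpow_inv_le_iff_of_pos hx hy three_pos, ← Real.rpow_natCast]
  norm_num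

lemma Real.le_rpow_one_div_three_iff {x y : ℝ} (hx : 0 ≤ x) (hy : 0 ≤ y) :
    x ≤ y ^ ((1 : ℝ) / 3) ↔ x ^ 3 ≤ y := by
  rw [one_div, Real.le_rpow_inv_iff_of_pos hx hy three_pos, ← Real.rpow_natCast]
  norm_num

/-- If `d₀ > 0`, `c > 0` and `r₁ > 2d₀` satisfies
`(r₁ − 2d₀)²·r₁² = c·(r₁ − d₀)`, then `c^(1/3) ≤ r₁ ≤ c^(1/3) + 2d₀`. -/
theorem stmt_11 (d₀ c r₁ : ℝ) (hd : 0 < d₀) (hc : 0 < c) (hr : 2 * d₀ < r₁)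
    (heq : (r₁ - 2 * d₀) ^ 2 * r₁ ^ 2 = c * (r₁ - d₀)) :
    c ^ ((1 : ℝ) / 3) ≤ r₁ ∧ r₁ ≤ c ^ ((1 : ℝ) / 3) + 2 * d₀ := by
  have hgap : 0 ≤ r₁ - 2 * d₀ := by linarith
  refine ⟨(Real.rpow_one_div_three_le_iff hc.le (by linarith)).2
      (le_cube_of_sq_mul_sq_eq hd.le hr heq), ?_⟩
  have hgap_le : r₁ - 2 * d₀ ≤ c ^ ((1 : ℝ) / 3) :=
    (Real.le_rpow_one_div_three_iff hgap hc.le).2 (sub_two_mul_cube_le_of_sq_mul_sq_eq hd.le hr heq)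
  linarith
end

section
/- Let d₀ > 0, r > 0, β_N > 0, N > 0 and z be reals with N = β_N·r², and set c = 4·d₀·r²·N^{z}. Suppose r₁ > 2d₀ satisfies (r₁ − 2d₀)²·r₁² = c·(r₁ − d₀), and assume c^{1/3} ≥ 2d₀. Then the diagonal-block size N_{d,1} = β_N(r₁ − 2d₀)² and the number of blocks m₁ = r²/r₁² satisfy: β_N·(c^{1/3} − 2d₀)² ≤ N_{d,1} ≤ (4·d₀·β_N^{1/2}·N^{1+z})^{2/3} and r²/(c^{1/3} + 2d₀)² ≤ m₁ ≤ (4d₀)^{−2/3}·β_N^{−1/3}·N^{(1−2z)/3}. -/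
/-!
Multiplying out, the cut equation gives `(c - (r₁ - 2d₀)³)(r₁ - d₀) = (r₁ - 2d₀)² d₀ (3r₁ - 2d₀)`
and `(r₁³ - c)(r₁ - d₀) = r₁² d₀ (3r₁ - 4d₀)`, so `r₁ - 2d₀ ≤ c^(1/3) ≤ r₁`. Since `c·β_N = 4d₀N^(1+z)`,
the two power expressions are just `β_N c^(2/3)` and `r²/c^(2/3)`, and all four bounds follow by
monotonicity.
-/

open Real

section CutEquation

variable {d r₁ c : ℝ}

theorem sub_two_mul_pow_three_le_of_cut_eq (hd : 0 ≤ d) (hr₁ : 2 * d < r₁)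
    (heq : (r₁ - 2 * d) ^ 2 * r₁ ^ 2 = c * (r₁ - d)) : (r₁ - 2 * d) ^ 3 ≤ c := by
  have key : (c - (r₁ - 2 * d) ^ 3) * (r₁ - d) = (r₁ - 2 * d) ^ 2 * (d * (3 * r₁ - 2 * d)) := by
    linear_combination -heq
  have h : 0 ≤ (c - (r₁ - 2 * d) ^ 3) * (r₁ - d) :=
    key ▸ mul_nonneg (sq_nonneg _) (mul_nonneg hd (by linarith))
  linarith [nonneg_of_mul_nonneg_left h (by linarith)]

theorem le_pow_three_of_cut_eq (hd : 0 ≤ d) (hr₁ : 2 * d < r₁)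
    (heq : (r₁ - 2 * d) ^ 2 * r₁ ^ 2 = c * (r₁ - d)) : c ≤ r₁ ^ 3 := by
  have key : (r₁ ^ 3 - c) * (r₁ - d) = r₁ ^ 2 * (d * (3 * r₁ - 4 * d)) := by
    linear_combination heq
  have h : 0 ≤ (r₁ ^ 3 - c) * (r₁ - d) :=
    key ▸ mul_nonneg (sq_nonneg _) (mul_nonneg hd (by linarith))
  linarith [nonneg_of_mul_nonneg_left h (by linarith)]

end CutEquation

section ClosedForms

variable {d₀ βN N z c : ℝ}

theorem pos_of_mul_eq_rpow (hd : 0 < d₀) (hβ : 0 < βN) (hN : 0 < N)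
    (hc : c * βN = 4 * d₀ * N ^ (1 + z)) : 0 < c :=
  pos_of_mul_pos_left (hc ▸ by positivity) hβ.le

theorem log_eq_of_mul_eq_rpow (hd : 0 < d₀) (hβ : 0 < βN) (hN : 0 < N)
    (hc : c * βN = 4 * d₀ * N ^ (1 + z)) :
    log c = log (4 * d₀) + (1 + z) * log N - log βN := by
  have h := congrArg log hc
  rw [log_mul (pos_of_mul_eq_rpow hd hβ hN hc).ne' hβ.ne', log_mul (by positivity) (by positivity),
    log_rpow hN] at h
  linarith

theorem diag_bound_eq_mul_sq (hd : 0 < d₀) (hβ : 0 < βN) (hN : 0 < N)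
    (hc : c * βN = 4 * d₀ * N ^ (1 + z)) :
    (4 * d₀ * βN ^ ((1 : ℝ) / 2) * N ^ (1 + z)) ^ ((2 : ℝ) / 3) = βN * (c ^ ((1 : ℝ) / 3)) ^ 2 := by
  have hc0 := pos_of_mul_eq_rpow hd hβ hN hc
  apply log_injOn_pos (Set.mem_Ioi.2 (by positivity)) (Set.mem_Ioi.2 (by positivity))
  rw [log_rpow (by positivity), log_mul (by positivity) (by positivity),
    log_mul (by positivity) (by positivity), log_rpow hβ, log_rpow hN,
    log_mul hβ.ne' (by positivity), log_pow, log_rpow hc0, log_eq_of_mul_eq_rpow hd hβ hN hc]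
  push_cast
  ring

theorem count_bound_eq_div_sq (hd : 0 < d₀) (hβ : 0 < βN) (hN : 0 < N)
    (hc : c * βN = 4 * d₀ * N ^ (1 + z)) :
    (4 * d₀) ^ (-(2 : ℝ) / 3) * βN ^ (-(1 : ℝ) / 3) * N ^ ((1 - 2 * z) / 3) =
      N / βN / (c ^ ((1 : ℝ) / 3)) ^ 2 := by
  have hc0 := pos_of_mul_eq_rpow hd hβ hN hc
  apply log_injOn_pos (Set.mem_Ioi.2 (by positivity)) (Set.mem_Ioi.2 (by positivity))
  rw [log_mul (by positivity) (by positivity), log_mul (by positivity) (by positivity),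
    log_rpow (by positivity), log_rpow hβ, log_rpow hN, log_div (by positivity) (by positivity),
    log_div hN.ne' hβ.ne', log_pow, log_rpow hc0, log_eq_of_mul_eq_rpow hd hβ hN hc]
  push_cast
  ring

end ClosedForms

theorem stmt_12_general (d₀ r βN N z c r₁ : ℝ)
    (hd : 0 < d₀) (hβ : 0 < βN) (hN : 0 < N)
    (hNe : N = βN * r ^ 2)
    (hc : c = 4 * d₀ * r ^ 2 * N ^ z)
    (hr₁ : 2 * d₀ < r₁)
    (heq : (r₁ - 2 * d₀) ^ 2 * r₁ ^ 2 = c * (r₁ - d₀))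
    (hcd : 2 * d₀ ≤ c ^ ((1 : ℝ) / 3)) :
    βN * (c ^ ((1 : ℝ) / 3) - 2 * d₀) ^ 2 ≤ βN * (r₁ - 2 * d₀) ^ 2 ∧
    βN * (r₁ - 2 * d₀) ^ 2 ≤ (4 * d₀ * βN ^ ((1 : ℝ) / 2) * N ^ (1 + z)) ^ ((2 : ℝ) / 3) ∧
    r ^ 2 / (c ^ ((1 : ℝ) / 3) + 2 * d₀) ^ 2 ≤ r ^ 2 / r₁ ^ 2 ∧
    r ^ 2 / r₁ ^ 2 ≤ (4 * d₀) ^ (-(2 : ℝ) / 3) * βN ^ (-(1 : ℝ) / 3) * N ^ ((1 - 2 * z) / 3) := by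
  have hr2 : r ^ 2 = N / βN := by rw [hNe, mul_div_cancel_left₀ _ hβ.ne']
  have hcβ : c * βN = 4 * d₀ * N ^ (1 + z) := by
    rw [hc, rpow_add hN, rpow_one, hNe]; ring
  have hc0 := pos_of_mul_eq_rpow hd hβ hN hcβ
  have hlow : r₁ - 2 * d₀ ≤ c ^ ((1 : ℝ) / 3) := by
    rw [one_div, le_rpow_inv_iff_of_pos (by linarith) hc0.le three_pos]
    exact_mod_cast sub_two_mul_pow_three_le_of_cut_eq hd.le hr₁ heq
  have hupp : c ^ ((1 : ℝ) / 3) ≤ r₁ := by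
    rw [one_div, rpow_inv_le_iff_of_pos hc0.le (by linarith) three_pos]
    exact_mod_cast le_pow_three_of_cut_eq hd.le hr₁ heq
  have hr₁0 : 0 < r₁ := by linarith
  refine ⟨?_, ?_, ?_, ?_⟩
  · gcongr
  · rw [diag_bound_eq_mul_sq hd hβ hN hcβ]
    gcongr
  · gcongr
    linarith
  · rw [count_bound_eq_div_sq hd hβ hN hcβ, ← hr2]
    gcongr

/-- With `N = β_N·r²`, `c = 4d₀r²N^z`, `r₁ > 2d₀` the solution of
`(r₁ − 2d₀)²·r₁² = c·(r₁ − d₀)`, and `c^(1/3) ≥ 2d₀`, the diagonal-block size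
`N_{d,1} = β_N(r₁ − 2d₀)²` and the number of blocks `m₁ = r²/r₁²` satisfy
`β_N·(c^(1/3) − 2d₀)² ≤ N_{d,1} ≤ (4d₀·β_N^(1/2)·N^(1+z))^(2/3)` and
`r²/(c^(1/3) + 2d₀)² ≤ m₁ ≤ (4d₀)^(−2/3)·β_N^(−1/3)·N^((1−2z)/3)`. -/
theorem stmt_12 (d₀ r βN N z c r₁ : ℝ)
    (hd : 0 < d₀) (hr : 0 < r) (hβ : 0 < βN) (hN : 0 < N)
    (hNe : N = βN * r ^ 2)
    (hc : c = 4 * d₀ * r ^ 2 * N ^ z)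
    (hr₁ : 2 * d₀ < r₁)
    (heq : (r₁ - 2 * d₀) ^ 2 * r₁ ^ 2 = c * (r₁ - d₀))
    (hcd : 2 * d₀ ≤ c ^ ((1 : ℝ) / 3)) :
    βN * (c ^ ((1 : ℝ) / 3) - 2 * d₀) ^ 2 ≤ βN * (r₁ - 2 * d₀) ^ 2 ∧
    βN * (r₁ - 2 * d₀) ^ 2 ≤ (4 * d₀ * βN ^ ((1 : ℝ) / 2) * N ^ (1 + z)) ^ ((2 : ℝ) / 3) ∧
    r ^ 2 / (c ^ ((1 : ℝ) / 3) + 2 * d₀) ^ 2 ≤ r ^ 2 / r₁ ^ 2 ∧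
    r ^ 2 / r₁ ^ 2 ≤ (4 * d₀) ^ (-(2 : ℝ) / 3) * βN ^ (-(1 : ℝ) / 3) * N ^ ((1 - 2 * z) / 3) :=
  stmt_12_general d₀ r βN N z c r₁ hd hβ hN hNe hc hr₁ heq hcd
end

section
/- Let s₁, s₂ be reals. Define f₁(z₁,z₂) = 2 − z₁ − s₁, f₂(z₁,z₂) = (14/9)(1+z₁) − (2/3)z₂ − s₂, f₃(z₁,z₂) = (14/9)(1+z₁) + (4/3)z₂. Then the minimum over (z₁,z₂) ∈ ℝ² of max(f₁, f₂, f₃) equals 42/23 − (14/23)s₁ − (6/23)s₂, and it is attained at z₁ = 4/23 − (9/23)s₁ + (6/23)s₂, z₂ = −s₂/2, where all three functions take this common value. -/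
/-!
The lower bound is linear-programming duality: with the weights `14/23, 6/23, 3/23` the
`z₁`- and `z₂`-terms cancel, so `(14/23) f₁ + (6/23) f₂ + (3/23) f₃ = 42/23 − (14/23) s₁ − (6/23) s₂`
identically, and a convex combination never exceeds the maximum.
-/

theorem convex_combination_le_max₃ {α : Type*} [Field α] [LinearOrder α] [IsStrictOrderedRing α]
    {a b c u v w : α} (hu : 0 ≤ u) (hv : 0 ≤ v) (hw : 0 ≤ w) (huvw : u + v + w = 1) :
    u * a + v * b + w * c ≤ max a (max b c) := by
  set m := max a (max b c)
  have ha : a ≤ m := le_max_left _ _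
  have hb : b ≤ m := (le_max_left _ _).trans (le_max_right _ _)
  have hc : c ≤ m := (le_max_right _ _).trans (le_max_right _ _)
  calc u * a + v * b + w * c ≤ u * m + v * m + w * m := by gcongr
    _ = m := by rw [← add_mul, ← add_mul, huvw, one_mul]

/-- For `f₁ = 2 − z₁ − s₁`, `f₂ = (14/9)(1+z₁) − (2/3)z₂ − s₂`,
`f₃ = (14/9)(1+z₁) + (4/3)z₂`, the minimum over `(z₁, z₂) ∈ ℝ²` of `max(f₁, f₂, f₃)`
equals `42/23 − (14/23)s₁ − (6/23)s₂`, attained at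
`z₁ = 4/23 − (9/23)s₁ + (6/23)s₂`, `z₂ = −s₂/2`, where all three functions take this
common value. -/
theorem stmt_16 (s₁ s₂ : ℝ) :
    (∀ z₁ z₂ : ℝ,
        42 / 23 - (14 / 23) * s₁ - (6 / 23) * s₂ ≤
          max (2 - z₁ - s₁)
            (max ((14 / 9) * (1 + z₁) - (2 / 3) * z₂ - s₂)
              ((14 / 9) * (1 + z₁) + (4 / 3) * z₂))) ∧
    (2 - (4 / 23 - (9 / 23) * s₁ + (6 / 23) * s₂) - s₁ =
        42 / 23 - (14 / 23) * s₁ - (6 / 23) * s₂) ∧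
    ((14 / 9) * (1 + (4 / 23 - (9 / 23) * s₁ + (6 / 23) * s₂)) - (2 / 3) * (-s₂ / 2) - s₂ =
        42 / 23 - (14 / 23) * s₁ - (6 / 23) * s₂) ∧
    ((14 / 9) * (1 + (4 / 23 - (9 / 23) * s₁ + (6 / 23) * s₂)) + (4 / 3) * (-s₂ / 2) =
        42 / 23 - (14 / 23) * s₁ - (6 / 23) * s₂) := by
  refine ⟨fun z₁ z₂ => ?_, by ring, by ring, by ring⟩
  calc 42 / 23 - (14 / 23) * s₁ - (6 / 23) * s₂
      = 14 / 23 * (2 - z₁ - s₁) + 6 / 23 * ((14 / 9) * (1 + z₁) - (2 / 3) * z₂ - s₂)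
          + 3 / 23 * ((14 / 9) * (1 + z₁) + (4 / 3) * z₂) := by ring
    _ ≤ _ := convex_combination_le_max₃ (by norm_num) (by norm_num) (by norm_num) (by norm_num)
end

section
/- Let s₁, s₂ be reals. Define g₁(z₁,z₂) = 2 − z₁ − s₁, g₂(z₁,z₂) = (16/9)(1+z₁) + (2/3)z₂ − s₂, g₃(z₁,z₂) = (14/9)(1+z₁) − (2/3)z₂ − s₂. Then the minimum over (z₁,z₂) ∈ ℝ² of max(g₁, g₂, g₃) equals 15/8 − (5/8)s₁ − (3/8)s₂, and it is attained at z₁ = 1/8 − (3/8)s₁ + (3/8)s₂, z₂ = −3/16 + (1/16)s₁ − (1/16)s₂, where all three functions take this common value. -/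
/-! The weights `5/8, 3/16, 3/16` make the combination `5/8 g₁ + 3/16 g₂ + 3/16 g₃` independent
of `(z₁, z₂)` and equal to `15/8 − 5s₁/8 − 3s₂/8`; a maximum dominates every convex
combination, which gives the lower bound, and the stated point is where `g₁ = g₂ = g₃`. -/

theorem le_max_max_of_convex_combination {a b c v wa wb wc : ℝ}
    (hwa : 0 ≤ wa) (hwb : 0 ≤ wb) (hwc : 0 ≤ wc) (hw : wa + wb + wc = 1)
    (hv : wa * a + wb * b + wc * c = v) : v ≤ max a (max b c) := by
  have ha : a ≤ max a (max b c) := le_max_left _ _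
  have hb : b ≤ max a (max b c) := (le_max_left _ _).trans (le_max_right _ _)
  have hc : c ≤ max a (max b c) := (le_max_right _ _).trans (le_max_right _ _)
  calc v = wa * a + wb * b + wc * c := hv.symm
    _ ≤ wa * max a (max b c) + wb * max a (max b c) + wc * max a (max b c) := by gcongr
    _ = max a (max b c) := by rw [← add_mul, ← add_mul, hw, one_mul]

/-- For `g₁ = 2 − z₁ − s₁`, `g₂ = (16/9)(1+z₁) + (2/3)z₂ − s₂`,
`g₃ = (14/9)(1+z₁) − (2/3)z₂ − s₂`, the minimum over `(z₁, z₂) ∈ ℝ²` of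
`max(g₁, g₂, g₃)` equals `15/8 − (5/8)s₁ − (3/8)s₂`, attained at
`z₁ = 1/8 − (3/8)s₁ + (3/8)s₂`, `z₂ = −3/16 + (1/16)s₁ − (1/16)s₂`, where all three
functions take this common value. -/
theorem stmt_17 (s₁ s₂ : ℝ) :
    (∀ z₁ z₂ : ℝ,
        15 / 8 - (5 / 8) * s₁ - (3 / 8) * s₂ ≤
          max (2 - z₁ - s₁)
            (max ((16 / 9) * (1 + z₁) + (2 / 3) * z₂ - s₂)
              ((14 / 9) * (1 + z₁) - (2 / 3) * z₂ - s₂))) ∧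
    (2 - (1 / 8 - (3 / 8) * s₁ + (3 / 8) * s₂) - s₁ =
        15 / 8 - (5 / 8) * s₁ - (3 / 8) * s₂) ∧
    ((16 / 9) * (1 + (1 / 8 - (3 / 8) * s₁ + (3 / 8) * s₂)) +
          (2 / 3) * (-3 / 16 + (1 / 16) * s₁ - (1 / 16) * s₂) - s₂ =
        15 / 8 - (5 / 8) * s₁ - (3 / 8) * s₂) ∧
    ((14 / 9) * (1 + (1 / 8 - (3 / 8) * s₁ + (3 / 8) * s₂)) -
          (2 / 3) * (-3 / 16 + (1 / 16) * s₁ - (1 / 16) * s₂) - s₂ =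
        15 / 8 - (5 / 8) * s₁ - (3 / 8) * s₂) := by
  refine ⟨fun z₁ z₂ => ?_, by ring, by ring, by ring⟩
  exact le_max_max_of_convex_combination (wa := 5 / 8) (wb := 3 / 16) (wc := 3 / 16)
    (by norm_num) (by norm_num) (by norm_num) (by norm_num) (by ring)
end

section
/- Let s₁ be a real. Define h₁(z₁,z₂) = 2 − z₁ − s₁, h₂(z₁,z₂) = 1 + (8/9)(1+z₁) − (2/3)z₂ − s₁, h₃(z₁,z₂) = 1 + (10/9)(1+z₁) + (2/3)z₂ − s₁. Then the minimum over (z₁,z₂) ∈ ℝ² of max(h₁, h₂, h₃) equals 2 − s₁, and it is attained at z₁ = 0, z₂ = −1/6, where all three functions take this common value. -/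
theorem convex_combination_le_max_max {𝕜 : Type*} [Field 𝕜] [LinearOrder 𝕜]
    [IsStrictOrderedRing 𝕜] {a b c x y w : 𝕜} (ha : 0 ≤ a) (hb : 0 ≤ b) (hc : 0 ≤ c)
    (habc : a + b + c = 1) : a * x + b * y + c * w ≤ max x (max y w) := by
  have hx : x ≤ max x (max y w) := le_max_left _ _
  have hy : y ≤ max x (max y w) := (le_max_left _ _).trans (le_max_right _ _)
  have hw : w ≤ max x (max y w) := (le_max_right _ _).trans (le_max_right _ _)
  calc a * x + b * y + c * w
      ≤ a * max x (max y w) + b * max x (max y w) + c * max x (max y w) := by gcongr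
    _ = max x (max y w) := by rw [← add_mul, ← add_mul, habc, one_mul]

/-- For `h₁ = 2 − z₁ − s₁`, `h₂ = 1 + (8/9)(1+z₁) − (2/3)z₂ − s₁`,
`h₃ = 1 + (10/9)(1+z₁) + (2/3)z₂ − s₁`, the minimum over `(z₁, z₂) ∈ ℝ²` of
`max(h₁, h₂, h₃)` equals `2 − s₁`, attained at `z₁ = 0`, `z₂ = −1/6`, where all three
functions take this common value. -/
theorem stmt_18 (s₁ : ℝ) :
    (∀ z₁ z₂ : ℝ,
        2 - s₁ ≤
          max (2 - z₁ - s₁)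
            (max (1 + (8 / 9) * (1 + z₁) - (2 / 3) * z₂ - s₁)
              (1 + (10 / 9) * (1 + z₁) + (2 / 3) * z₂ - s₁))) ∧
    (2 - (0 : ℝ) - s₁ = 2 - s₁) ∧
    (1 + (8 / 9) * (1 + (0 : ℝ)) - (2 / 3) * (-1 / 6 : ℝ) - s₁ = 2 - s₁) ∧
    (1 + (10 / 9) * (1 + (0 : ℝ)) + (2 / 3) * (-1 / 6 : ℝ) - s₁ = 2 - s₁) := by
  refine ⟨fun z₁ z₂ => ?_, by norm_num, by norm_num, by norm_num⟩
  -- The weights 1/2, 1/4, 1/4 are the ones that cancel both `z₁` and `z₂`.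
  calc 2 - s₁
      = 1 / 2 * (2 - z₁ - s₁) + 1 / 4 * (1 + (8 / 9) * (1 + z₁) - (2 / 3) * z₂ - s₁)
          + 1 / 4 * (1 + (10 / 9) * (1 + z₁) + (2 / 3) * z₂ - s₁) := by ring
    _ ≤ _ := convex_combination_le_max_max (by norm_num) (by norm_num) (by norm_num) (by norm_num)
end
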